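/- For every ISAC network, the maximum free-sensing fidelity s̃ := max{s : (s, f*) ∈ R}, where f* is the maximum throughput, satisfies s̃ > 0 if and only if there exists a valid assignment achieving throughput f* in which f_{(i,j)} + f_{(j,i)} < c_{{i,j}} for some undirected link {i,j} ∈ U(A); that is, nonzero free sensing is possible if and only if the maximum throughput can be achieved without exhausting all link capacities in the sensing region. -/

import Mathlib

/-- An ISAC network on a finite node type `V`: a symmetric, irreflexive set of
directed links `E`, a source `Tx`, a sink `Rx`, a nonnegative capacity `c` on
undirected links (unordered pairs), and a sensing region `A`. -/
structure ISACNetwork (V : Type) [Fintype V] [DecidableEq V] where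
  E : Finset (V × V)
  symm : ∀ i j : V, (i, j) ∈ E → (j, i) ∈ E
  irrefl : ∀ i : V, (i, i) ∉ E
  Tx : V
  Rx : V
  TxNeRx : Tx ≠ Rx
  c : Sym2 V → ℝ
  c_nonneg : ∀ u : Sym2 V, 0 ≤ c u
  A : Finset V

namespace ISACNetwork

variable {V : Type} [Fintype V] [DecidableEq V]

/-- `E(A)`: directed links with both endpoints in the sensing region. -/
def EA (N : ISACNetwork V) : Finset (V × V) :=
  N.E.filter fun e => e.1 ∈ N.A ∧ e.2 ∈ N.A

/-- `U(A)`: undirected links with both endpoints in the sensing region. -/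
def UA (N : ISACNetwork V) : Finset (Sym2 V) :=
  N.EA.image (fun e => Sym2.mk e.1 e.2)

/-- A valid assignment of communication rates `f` and sensing rates `s`:
nonnegative rates for which there is a nonnegative capacity split `ca` of the
undirected link capacities with `f e + s e ≤ ca e` on each directed link, no
communication into the source or out of the sink, and flow conservation at
every intermediate node. -/
def Valid (N : ISACNetwork V) (f s : V × V → ℝ) : Prop :=
  (∀ e ∈ N.E, 0 ≤ f e) ∧ (∀ e ∈ N.E, 0 ≤ s e) ∧
  ∃ ca : V × V → ℝ,
    (∀ e ∈ N.E, 0 ≤ ca e) ∧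
    (∀ i j : V, (i, j) ∈ N.E → ca (i, j) + ca (j, i) = N.c (Sym2.mk i j)) ∧
    (∀ e ∈ N.E, f e + s e ≤ ca e) ∧
    (∀ i : V, (i, N.Tx) ∈ N.E → f (i, N.Tx) = 0) ∧
    (∀ j : V, (N.Rx, j) ∈ N.E → f (N.Rx, j) = 0) ∧
    (∀ j : V, j ≠ N.Tx → j ≠ N.Rx →
      ∑ i ∈ Finset.univ.filter (fun i => (i, j) ∈ N.E), f (i, j)
        = ∑ k ∈ Finset.univ.filter (fun k => (j, k) ∈ N.E), f (j, k))

/-- The sensing fidelity achieved by a sensing-rate assignment. -/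
def sensOf (N : ISACNetwork V) (s : V × V → ℝ) : ℝ := ∑ e ∈ N.EA, s e

/-- The throughput achieved by a communication-rate assignment. -/
def flowOf (N : ISACNetwork V) (f : V × V → ℝ) : ℝ :=
  ∑ j ∈ Finset.univ.filter (fun j => (N.Tx, j) ∈ N.E), f (N.Tx, j)

/-- The sensing–throughput region: all pairs `(s, f)` achieved by a valid
assignment. -/
def Region (N : ISACNetwork V) : Set (ℝ × ℝ) :=
  { p | ∃ fr sr : V × V → ℝ, N.Valid fr sr ∧ N.sensOf sr = p.1 ∧ N.flowOf fr = p.2 }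

end ISACNetwork

/-!
Sensing on a link `{i, j}` and the flow through it share its capacity, so the sensing on that
link is at most its residual capacity `c{i,j} - f(i,j) - f(j,i)`. Conversely, keeping the flow
and giving a link its entire residual capacity as sensing (and nothing elsewhere) is valid.
Hence a maximum-throughput assignment with positive sensing leaves slack on some sensing link,
and slack on a sensing link at maximum throughput yields positive sensing.
-/

namespace ISACNetwork

variable {V : Type} [Fintype V] [DecidableEq V] {N : ISACNetwork V}

lemma mem_EA_swap {i j : V} (h : (i, j) ∈ N.EA) : (j, i) ∈ N.EA := by
  simp only [EA, Finset.mem_filter] at h ⊢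
  exact ⟨N.symm i j h.1, h.2.2, h.2.1⟩

lemma Valid.add_sensing_le_sub_flow {f s : V × V → ℝ} (hv : N.Valid f s) {i j : V}
    (hij : (i, j) ∈ N.E) :
    s (i, j) + s (j, i) ≤ N.c (Sym2.mk i j) - (f (i, j) + f (j, i)) := by
  obtain ⟨-, -, ca, -, hsplit, hle, -⟩ := hv
  have := hle _ hij
  have := hle _ (N.symm i j hij)
  linarith [hsplit i j hij]

lemma Valid.exists_slack_of_sensOf_pos {f s : V × V → ℝ} (hv : N.Valid f s)
    (hs : 0 < N.sensOf s) : ∃ i j : V, (i, j) ∈ N.EA ∧ f (i, j) + f (j, i) < N.c (Sym2.mk i j) := by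
  obtain ⟨⟨i, j⟩, hij, hpos⟩ : ∃ e ∈ N.EA, (0 : ℝ) < s e :=
    Finset.exists_lt_of_sum_lt (by simpa [sensOf] using hs)
  have hijE : (i, j) ∈ N.E := (Finset.mem_filter.mp hij).1
  have := hv.add_sensing_le_sub_flow hijE
  have := hv.2.1 _ (N.symm i j hijE)
  exact ⟨i, j, hij, by linarith⟩

def residualSensing (ca f : V × V → ℝ) (i j : V) (e : V × V) : ℝ :=
  if e = (i, j) ∨ e = (j, i) then ca e - f e else 0

lemma sensOf_residualSensing {ca f : V × V → ℝ} {i j : V} (hij : (i, j) ∈ N.EA) :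
    N.sensOf (residualSensing ca f i j) = ca (i, j) - f (i, j) + (ca (j, i) - f (j, i)) := by
  have hne : (i, j) ≠ (j, i) := by
    intro h
    cases (Prod.ext_iff.mp h).1
    exact N.irrefl i (Finset.mem_filter.mp hij).1
  have hpair : ({(i, j), (j, i)} : Finset (V × V)) ⊆ N.EA :=
    Finset.insert_subset hij (Finset.singleton_subset_iff.mpr (mem_EA_swap hij))
  rw [sensOf, ← Finset.sum_subset hpair, Finset.sum_pair hne]
  · simp [residualSensing]
  · intro e _ he
    simp only [Finset.mem_insert, Finset.mem_singleton] at he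
    simp [residualSensing, he]

lemma Valid.exists_sensOf_eq_slack {f s : V × V → ℝ} (hv : N.Valid f s) {i j : V}
    (hij : (i, j) ∈ N.EA) :
    ∃ s' : V × V → ℝ, N.Valid f s' ∧ N.sensOf s' = N.c (Sym2.mk i j) - (f (i, j) + f (j, i)) := by
  obtain ⟨hf0, hs0, ca, hca0, hsplit, hle, hsrc, hsink, hcons⟩ := hv
  have hresid : ∀ e ∈ N.E, 0 ≤ ca e - f e := fun e he => by linarith [hle e he, hs0 e he]
  refine ⟨residualSensing ca f i j, ⟨hf0, ?_, ca, hca0, hsplit, ?_, hsrc, hsink, hcons⟩, ?_⟩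
  · intro e he
    unfold residualSensing
    split_ifs
    exacts [hresid e he, le_rfl]
  · intro e he
    unfold residualSensing
    split_ifs
    · linarith
    · linarith [hresid e he]
  · rw [sensOf_residualSensing hij, ← hsplit i j (Finset.mem_filter.mp hij).1]
    ring

end ISACNetwork

theorem free_sensing_iff_general {V : Type} [Fintype V] [DecidableEq V]
    (N : ISACNetwork V) (fstar stil : ℝ)
    (hstil : IsGreatest {s : ℝ | (s, fstar) ∈ N.Region} stil) :
    0 < stil ↔ ∃ fr sr : V × V → ℝ, N.Valid fr sr ∧ N.flowOf fr = fstar ∧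
      ∃ i j : V, (i, j) ∈ N.EA ∧ fr (i, j) + fr (j, i) < N.c (Sym2.mk i j) := by
  constructor
  · intro hpos
    obtain ⟨fr, sr, hv, hsens, hflow⟩ := hstil.1
    exact ⟨fr, sr, hv, hflow, hv.exists_slack_of_sensOf_pos (hsens ▸ hpos)⟩
  · rintro ⟨fr, sr, hv, hflow, i, j, hij, hslack⟩
    obtain ⟨s', hv', hsens'⟩ := hv.exists_sensOf_eq_slack hij
    have : N.sensOf s' ≤ stil := hstil.2 ⟨fr, s', hv', rfl, hflow⟩
    linarith

/-- The maximum free-sensing fidelity `s̃ = max{s : (s, f*) ∈ R}` is strictly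
positive if and only if the maximum throughput `f*` can be achieved by a valid
assignment which does not exhaust the capacity of some undirected link in the
sensing region. -/
theorem free_sensing_iff {V : Type} [Fintype V] [DecidableEq V]
    (N : ISACNetwork V) (fstar stil : ℝ)
    (hfstar : IsGreatest {f : ℝ | ∃ s : ℝ, (s, f) ∈ N.Region} fstar)
    (hstil : IsGreatest {s : ℝ | (s, fstar) ∈ N.Region} stil) :
    0 < stil ↔ ∃ fr sr : V × V → ℝ, N.Valid fr sr ∧ N.flowOf fr = fstar ∧
      ∃ i j : V, (i, j) ∈ N.EA ∧ fr (i, j) + fr (j, i) < N.c (Sym2.mk i j) :=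
  free_sensing_iff_general N fstar stil hstil
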